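/- arXiv:1008.4010 — 6 statements merged into one kernel-verified Lean document; each statement's English description precedes it below -/
import Mathlib

section
/- The symmetrized bidisc 𝔾₂ := {(z+w, zw) : z, w ∈ 𝔻} coincides with the set {(s,p) ∈ ℂ² : |s - conj(s)·p| + |p|² < 1}. -/
/-!
Write `s = z + w`, `p = z * w`. The identity `s - s̄ p = z (1 - |w|²) + w (1 - |z|²)` bounds
`|s - s̄ p| + |p|²` by `1 - (1 - |z|)(1 - |w|)(1 - |z||w|)`, which is `< 1` on the bidisc.
Conversely, every pair `(s, p)` is `(z + w, z w)` for the two roots of `X² - s X + p`, and the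
identity `(s - s̄ p) |z|² = (|z|² - |p|²) z - p (|z|² - 1) z̄` shows that a root with
`|z| ≥ 1` forces `|s - s̄ p| ≥ 1 - |p|²`.
-/

open Complex ComplexConjugate

namespace SymmetrizedBidisc

lemma exists_add_eq_mul_eq (s p : ℂ) : ∃ z w : ℂ, z + w = s ∧ z * w = p := by
  obtain ⟨d, hd⟩ := IsAlgClosed.exists_pow_nat_eq (s ^ 2 - 4 * p) two_pos
  exact ⟨(s + d) / 2, (s - d) / 2, by ring, by linear_combination (-1 / 4 : ℂ) * hd⟩

lemma norm_one_sub_conj_mul_self {z : ℂ} (hz : ‖z‖ ≤ 1) :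
    ‖1 - conj z * z‖ = 1 - ‖z‖ ^ 2 := by
  rw [conj_mul', ← ofReal_pow, ← ofReal_one, ← ofReal_sub, norm_real, Real.norm_of_nonneg]
  nlinarith [norm_nonneg z]

lemma add_sub_conj_add_mul_mul_eq (z w : ℂ) :
    (z + w) - conj (z + w) * (z * w) = z * (1 - conj w * w) + w * (1 - conj z * z) := by
  rw [map_add]; ring

lemma norm_add_sub_conj_add_mul_mul_le {z w : ℂ} (hz : ‖z‖ ≤ 1) (hw : ‖w‖ ≤ 1) :
    ‖(z + w) - conj (z + w) * (z * w)‖ ≤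
      ‖z‖ * (1 - ‖w‖ ^ 2) + ‖w‖ * (1 - ‖z‖ ^ 2) := by
  calc ‖(z + w) - conj (z + w) * (z * w)‖
      ≤ ‖z * (1 - conj w * w)‖ + ‖w * (1 - conj z * z)‖ := by
        rw [add_sub_conj_add_mul_mul_eq]; exact norm_add_le _ _
    _ = ‖z‖ * (1 - ‖w‖ ^ 2) + ‖w‖ * (1 - ‖z‖ ^ 2) := by
        rw [norm_mul, norm_mul, norm_one_sub_conj_mul_self hz, norm_one_sub_conj_mul_self hw]

lemma norm_add_sub_conj_add_mul_mul_add_sq_lt_one {z w : ℂ}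
    (hz : ‖z‖ < 1) (hw : ‖w‖ < 1) :
    ‖(z + w) - conj (z + w) * (z * w)‖ + ‖z * w‖ ^ 2 < 1 := by
  have hle := norm_add_sub_conj_add_mul_mul_le hz.le hw.le
  have hzw : ‖z‖ * ‖w‖ < 1 := mul_lt_one_of_nonneg_of_lt_one_left (norm_nonneg z) hz hw.le
  -- `1 - (a (1 - b²) + b (1 - a²) + a² b²) = (1 - a) (1 - b) (1 - a b)`
  have hpos : 0 < (1 - ‖z‖) * (1 - ‖w‖) * (1 - ‖z‖ * ‖w‖) := by
    apply mul_pos (mul_pos _ _) <;> linarith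
  rw [norm_mul]
  nlinarith

lemma add_sub_conj_add_mul_mul_mul_sq_norm_eq (z w : ℂ) :
    ((z + w) - conj (z + w) * (z * w)) * ((‖z‖ ^ 2 : ℝ) : ℂ) =
      ((‖z‖ ^ 2 - ‖z * w‖ ^ 2 : ℝ) : ℂ) * z -
        z * w * ((‖z‖ ^ 2 - 1 : ℝ) : ℂ) * conj z := by
  push_cast
  rw [← conj_mul', ← conj_mul', map_add, map_mul]
  ring

lemma norm_lt_one_of_norm_add_sub_conj_add_mul_mul_add_sq_lt_one {z w : ℂ}
    (h : ‖(z + w) - conj (z + w) * (z * w)‖ + ‖z * w‖ ^ 2 < 1) : ‖z‖ < 1 := by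
  by_contra! hz
  have hlower :
      (‖z‖ ^ 2 - ‖z * w‖ ^ 2) * ‖z‖ - ‖z * w‖ * (‖z‖ ^ 2 - 1) * ‖z‖ ≤
      ‖(z + w) - conj (z + w) * (z * w)‖ * ‖z‖ ^ 2 := by
    have key := congrArg norm (add_sub_conj_add_mul_mul_mul_sq_norm_eq z w)
    rw [norm_mul _ ((_ : ℝ) : ℂ), norm_real, Real.norm_of_nonneg (by positivity)] at key
    rw [key]
    refine le_trans ?_ (norm_sub_norm_le _ _)
    rw [norm_mul _ z, norm_mul _ (conj z), norm_mul _ ((_ : ℝ) : ℂ), norm_real, norm_real,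
      norm_conj, Real.norm_of_nonneg (r := ‖z‖ ^ 2 - 1) (by nlinarith)]
    gcongr
    exact Real.le_norm_self _
  set a := ‖z‖
  set b := ‖z * w‖
  set c := ‖(z + w) - conj (z + w) * (z * w)‖
  have hb : b < 1 := by
    nlinarith [norm_nonneg (z * w), norm_nonneg (z + w - conj (z + w) * (z * w))]
  have hc : c * a ^ 2 < (1 - b ^ 2) * a ^ 2 :=
    mul_lt_mul_of_pos_right (by linarith) (by positivity)
  -- `(1 - b²) a² - ((a² - b²) a - b (a² - 1) a) = -a (a - 1) (a - b) (1 - b) ≤ 0`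
  have hnonneg : 0 ≤ a * (a - 1) * (a - b) * (1 - b) := by
    apply mul_nonneg (mul_nonneg (mul_nonneg _ _) _) <;> linarith
  nlinarith

theorem norm_lt_one_and_norm_lt_one_iff (z w : ℂ) :
    ‖z‖ < 1 ∧ ‖w‖ < 1 ↔
      ‖(z + w) - conj (z + w) * (z * w)‖ + ‖z * w‖ ^ 2 < 1 := by
  refine ⟨fun h => norm_add_sub_conj_add_mul_mul_add_sq_lt_one h.1 h.2, fun h => ⟨?_, ?_⟩⟩
  · exact norm_lt_one_of_norm_add_sub_conj_add_mul_mul_add_sq_lt_one h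
  · rw [add_comm z, mul_comm z] at h
    exact norm_lt_one_of_norm_add_sub_conj_add_mul_mul_add_sq_lt_one h

end SymmetrizedBidisc

open SymmetrizedBidisc

theorem stmt2 :
    (fun zw : ℂ × ℂ => (zw.1 + zw.2, zw.1 * zw.2)) ''
        (Metric.ball (0 : ℂ) 1 ×ˢ Metric.ball (0 : ℂ) 1) =
      {sp : ℂ × ℂ | ‖sp.1 - (starRingEnd ℂ) sp.1 * sp.2‖
        + ‖sp.2‖ ^ 2 < 1} := by
  ext sp
  constructor
  · rintro ⟨⟨z, w⟩, ⟨hz, hw⟩, rfl⟩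
    exact (norm_lt_one_and_norm_lt_one_iff z w).1
      ⟨mem_ball_zero_iff.1 hz, mem_ball_zero_iff.1 hw⟩
  · rintro (h : ‖sp.1 - conj sp.1 * sp.2‖ + ‖sp.2‖ ^ 2 < 1)
    obtain ⟨z, w, hs, hp⟩ := exists_add_eq_mul_eq sp.1 sp.2
    rw [← hs, ← hp] at h
    obtain ⟨hz, hw⟩ := (norm_lt_one_and_norm_lt_one_iff z w).2 h
    exact ⟨(z, w), ⟨mem_ball_zero_iff.2 hz, mem_ball_zero_iff.2 hw⟩, Prod.ext hs hp⟩
end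

section
/- For each ε ∈ (0,1), the map (s,p) ↦ (s - conj(s)·p, p) restricts to an ℝ-diffeomorphism from D_ε onto the convex domain G_ε := {(w,z) ∈ ℂ² : √(|w|² + ε) + |z|² < 1}. -/
open Complex

def Dset (ε : ℝ) : Set (ℂ × ℂ) :=
  {sp | Real.sqrt (‖sp.1 - (starRingEnd ℂ) sp.1 * sp.2‖ ^ 2 + ε)
      + ‖sp.2‖ ^ 2 < 1}

def Gset (ε : ℝ) : Set (ℂ × ℂ) :=
  {wz | Real.sqrt (‖wz.1‖ ^ 2 + ε) + ‖wz.2‖ ^ 2 < 1}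

noncomputable def Phi (sp : ℂ × ℂ) : ℂ × ℂ :=
  (sp.1 - (starRingEnd ℂ) sp.1 * sp.2, sp.2)

noncomputable def Psi (wz : ℂ × ℂ) : ℂ × ℂ :=
  ((wz.1 + (starRingEnd ℂ) wz.1 * wz.2) / (1 - wz.2 * (starRingEnd ℂ) wz.2), wz.2)

lemma mem_Dset_iff (ε : ℝ) (x : ℂ × ℂ) : x ∈ Dset ε ↔ Phi x ∈ Gset ε := by
  simp only [Dset, Gset, Phi, Set.mem_setOf_eq]

lemma snd_lt_one_of_Gset {ε : ℝ} {y : ℂ × ℂ} (hy : y ∈ Gset ε) (hε : 0 ≤ ε) :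
    Complex.normSq y.2 < 1 := by
  have h0 : 0 ≤ Real.sqrt (‖y.1‖ ^ 2 + ε) := Real.sqrt_nonneg _
  simp only [Gset, Set.mem_setOf_eq] at hy
  rw [Complex.normSq_eq_norm_sq]
  linarith

lemma denom_ne {z : ℂ} (h : Complex.normSq z < 1) :
    (1 : ℂ) - z * (starRingEnd ℂ) z ≠ 0 := by
  rw [Complex.mul_conj, ← Complex.ofReal_one, ← Complex.ofReal_sub, Complex.ofReal_ne_zero]
  linarith

lemma contDiff_conj : ContDiff ℝ (⊤ : ℕ∞) (fun z : ℂ => (starRingEnd ℂ) z) := by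
  exact Complex.conjCLE.contDiff

lemma left_inv' {x : ℂ × ℂ} (h : Complex.normSq x.2 < 1) : Psi (Phi x) = x := by
  have hd := denom_ne h
  unfold Psi Phi
  simp only [map_sub, map_mul, Complex.conj_conj]
  rw [Prod.mk.injEq]
  refine ⟨?_, rfl⟩
  rw [div_eq_iff hd]; ring

lemma right_inv' {y : ℂ × ℂ} (h : Complex.normSq y.2 < 1) : Phi (Psi y) = y := by
  have hd := denom_ne h
  have hd' : (1 : ℂ) - (starRingEnd ℂ) y.2 * y.2 ≠ 0 := by
    rwa [mul_comm]
  unfold Psi Phi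
  simp only [map_div₀, map_add, map_mul, map_sub, map_one, Complex.conj_conj]
  rw [Prod.mk.injEq]
  refine ⟨?_, rfl⟩
  field_simp
  ring

set_option maxHeartbeats 2000000 in
theorem stmt4 (ε : ℝ) (hε : 0 < ε) (hε1 : ε < 1) :
    Set.BijOn Phi (Dset ε) (Gset ε) ∧
      ContDiffOn ℝ (⊤ : ℕ∞) Phi (Dset ε) ∧
      ∃ Ψ : ℂ × ℂ → ℂ × ℂ,
        ContDiffOn ℝ (⊤ : ℕ∞) Ψ (Gset ε) ∧
        (∀ x ∈ Dset ε, Ψ (Phi x) = x) ∧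
        (∀ y ∈ Gset ε, Phi (Ψ y) = y) := by
  have hε0 : (0:ℝ) ≤ ε := le_of_lt hε
  have hDsnd : ∀ x ∈ Dset ε, Complex.normSq x.2 < 1 := by
    intro x hx
    exact snd_lt_one_of_Gset (y := Phi x) ((mem_Dset_iff ε x).mp hx) hε0
  have hleft : ∀ x ∈ Dset ε, Psi (Phi x) = x := fun x hx => left_inv' (hDsnd x hx)
  have hright : ∀ y ∈ Gset ε, Phi (Psi y) = y := fun y hy =>
    right_inv' (snd_lt_one_of_Gset hy hε0)
  have hmapsPhi : Set.MapsTo Phi (Dset ε) (Gset ε) := fun x hx => (mem_Dset_iff ε x).mp hx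
  have hmapsPsi : Set.MapsTo Psi (Gset ε) (Dset ε) := by
    intro y hy
    rw [mem_Dset_iff, hright y hy]
    exact hy
  have hPhi : ContDiff ℝ (⊤ : ℕ∞) Phi := by
    unfold Phi
    exact (contDiff_fst.sub ((contDiff_conj.comp contDiff_fst).mul contDiff_snd)).prodMk
      contDiff_snd
  refine ⟨?_, hPhi.contDiffOn, Psi, ?_, hleft, hright⟩
  · exact Set.InvOn.bijOn ⟨hleft, hright⟩ hmapsPhi hmapsPsi
  · apply ContDiffOn.prodMk
    · simp only [div_eq_mul_inv]
      exact ((contDiff_fst.add ((contDiff_conj.comp contDiff_fst).mul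
          contDiff_snd)).contDiffOn).mul
        (((contDiff_const.sub (contDiff_snd.mul
          (contDiff_conj.comp contDiff_snd))).contDiffOn).inv
          (fun y hy => denom_ne (snd_lt_one_of_Gset hy hε0)))
    · exact contDiff_snd.contDiffOn
end

section
/- The gradient of r(s,p) := |s - conj(s)·p|² + ε - (1-|p|²)², viewed as a real function on ℂ × 𝔻 ≅ ℝ⁴, does not vanish at any point of the boundary ∂D_ε, for ε ∈ (0,1). -/
open Complex

noncomputable def rdef (ε : ℝ) (sp : ℂ × ℂ) : ℝ :=
  ‖sp.1 - (starRingEnd ℂ) sp.1 * sp.2‖ ^ 2 + ε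
    - (1 - ‖sp.2‖ ^ 2) ^ 2

/-! At a boundary point `√(A + ε) = 1 - |p|²`, where `A = |s - s̄ p|²`. Scaling `s` by a real
factor multiplies `A` by its square, so at a critical point of `r` we get `A = 0`, hence
`s = s̄ p`; then scaling `p` moves `r` at rate `4|p|²(1 - |p|²)`, forcing `|p|² ∈ {0, 1}`, i.e.
`√ε ∈ {1, 0}`, which `0 < ε < 1` excludes. -/

lemma differentiable_rdef (ε : ℝ) : Differentiable ℝ (rdef ε) := by
  unfold rdef
  have : Differentiable ℝ fun sp : ℂ × ℂ => sp.1 - (starRingEnd ℂ) sp.1 * sp.2 :=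
    differentiable_fst.sub ((conjCLE.differentiable.comp differentiable_fst).mul differentiable_snd)
  exact ((this.norm_sq ℂ).add_const ε).sub (((differentiable_const 1).sub
    (differentiable_snd.norm_sq ℂ)).pow 2)

lemma sqrt_add_eq_one_of_mem_frontier_Dset {ε : ℝ} {z : ℂ × ℂ} (hz : z ∈ frontier (Dset ε)) :
    √(‖z.1 - (starRingEnd ℂ) z.1 * z.2‖ ^ 2 + ε) + ‖z.2‖ ^ 2 = 1 :=
  frontier_lt_subset_eq (f := fun z : ℂ × ℂ => √(‖z.1 - (starRingEnd ℂ) z.1 * z.2‖ ^ 2 + ε)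
    + ‖z.2‖ ^ 2) (by fun_prop) continuous_const hz

lemma rdef_smul_fst (ε c : ℝ) (s p : ℂ) :
    rdef ε (c • s, p) = c ^ 2 * ‖s - (starRingEnd ℂ) s * p‖ ^ 2 + ε - (1 - ‖p‖ ^ 2) ^ 2 := by
  have : c • s - (starRingEnd ℂ) (c • s) * p = c • (s - (starRingEnd ℂ) s * p) := by
    simp only [Complex.real_smul, map_mul, conj_ofReal]; ring
  simp only [rdef, this, norm_smul, mul_pow, Real.norm_eq_abs, sq_abs]

lemma rdef_smul_snd_of_eq {s p : ℂ} (hs : s = (starRingEnd ℂ) s * p) (ε c : ℝ) :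
    rdef ε (s, c • p) = (1 - c) ^ 2 * ‖s‖ ^ 2 + ε - (1 - c ^ 2 * ‖p‖ ^ 2) ^ 2 := by
  have : s - (starRingEnd ℂ) s * c • p = (1 - c) • s := by
    rw [Complex.real_smul, mul_left_comm, ← hs, Complex.real_smul]
    push_cast; ring
  simp only [rdef, this, norm_smul, mul_pow, Real.norm_eq_abs, sq_abs]

lemma hasLineDerivAt_rdef_fst (ε : ℝ) (s p : ℂ) :
    HasLineDerivAt ℝ (rdef ε) (2 * ‖s - (starRingEnd ℂ) s * p‖ ^ 2) (s, p) (s, 0) := by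
  have hline : (fun t : ℝ => rdef ε ((s, p) + t • (s, 0))) = fun t : ℝ =>
      (1 + t) ^ 2 * ‖s - (starRingEnd ℂ) s * p‖ ^ 2 + (ε - (1 - ‖p‖ ^ 2) ^ 2) := by
    funext t
    rw [add_sub_assoc', ← rdef_smul_fst, Prod.smul_mk, Prod.mk_add_mk, add_smul, one_smul,
      smul_zero, add_zero]
  unfold HasLineDerivAt
  rw [hline]
  simpa using (((hasDerivAt_id (0 : ℝ)).const_add 1).pow 2).mul_const
    (‖s - (starRingEnd ℂ) s * p‖ ^ 2) |>.add_const (ε - (1 - ‖p‖ ^ 2) ^ 2)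

lemma hasLineDerivAt_rdef_snd_of_eq {s p : ℂ} (hs : s = (starRingEnd ℂ) s * p) (ε : ℝ) :
    HasLineDerivAt ℝ (rdef ε) (4 * ‖p‖ ^ 2 * (1 - ‖p‖ ^ 2)) (s, p) (0, p) := by
  have hline : (fun t : ℝ => rdef ε ((s, p) + t • (0, p))) = fun t : ℝ =>
      t ^ 2 * ‖s‖ ^ 2 + ε - (1 - (1 + t) ^ 2 * ‖p‖ ^ 2) ^ 2 := by
    funext t
    rw [← neg_sq, show -t = 1 - (1 + t) by ring, ← rdef_smul_snd_of_eq hs, Prod.smul_mk,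
      Prod.mk_add_mk, add_smul, one_smul, smul_zero, add_zero]
  unfold HasLineDerivAt
  rw [hline]
  have hquad := ((hasDerivAt_id (0 : ℝ)).pow 2).mul_const (‖s‖ ^ 2)
  have hquart :=
    (((((hasDerivAt_id (0 : ℝ)).const_add 1).pow 2).mul_const (‖p‖ ^ 2)).const_sub 1).pow 2
  exact ((hquad.add_const ε).sub hquart).congr_deriv (by
    simp only [Nat.cast_ofNat, id_eq, Nat.add_one_sub_one, pow_one, mul_zero, mul_one, zero_mul,
      Pi.pow_apply, add_zero, one_pow, one_mul, mul_neg, sub_neg_eq_add, zero_add]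
    ring)

theorem stmt7 (ε : ℝ) (hε : 0 < ε) (hε1 : ε < 1) :
    ∀ z ∈ frontier (Dset ε), fderiv ℝ (rdef ε) z ≠ 0 := by
  rintro ⟨s, p⟩ hz hcrit
  have hzero : HasFDerivAt (rdef ε) (0 : ℂ × ℂ →L[ℝ] ℝ) (s, p) :=
    hcrit ▸ (differentiable_rdef ε _).hasFDerivAt
  have hA : ‖s - (starRingEnd ℂ) s * p‖ = 0 := by
    simpa using (hasLineDerivAt_rdef_fst ε s p).unique (hzero.hasLineDerivAt _)
  have hs : s = (starRingEnd ℂ) s * p := sub_eq_zero.1 (norm_eq_zero.1 hA)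
  have hB : 4 * ‖p‖ ^ 2 * (1 - ‖p‖ ^ 2) = 0 :=
    (hasLineDerivAt_rdef_snd_of_eq hs ε).unique (hzero.hasLineDerivAt _)
  have hfront := sqrt_add_eq_one_of_mem_frontier_Dset hz
  rw [hA, zero_pow two_ne_zero, zero_add] at hfront
  have hsqrt : √ε * (1 - √ε) = 0 := by
    rw [show ‖p‖ ^ 2 = 1 - √ε by linarith] at hB
    linear_combination hB / 4
  rcases mul_eq_zero.1 hsqrt with h | h
  · exact hε.ne' ((Real.sqrt_eq_zero hε.le).1 h)
  · exact hε1.ne (Real.sqrt_eq_one.1 (sub_eq_zero.1 h).symm)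
end

section
/- For every ε ∈ (0,1) and every p ∈ ℂ with (1-|p|²)² ≥ ε, the following inequality holds: |1-2p+|p|²|²·2|p|²·ε + 2|p|²·ε² + 2ε((1-|p|²)² - ε)·Re(1-2p+|p|²) > 2|p|²·|ε² - ε(1-2p+|p|²)²|. -/
open Complex

theorem stmt11 (ε : ℝ) (hε : 0 < ε) (hε1 : ε < 1) (p : ℂ)
    (hp : ε ≤ (1 - ‖p‖ ^ 2) ^ 2) :
    ‖1 - 2 * p + (‖p‖ ^ 2 : ℝ)‖ ^ 2 * (2 * ‖p‖ ^ 2 * ε)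
        + 2 * ‖p‖ ^ 2 * ε ^ 2
        + 2 * ε * ((1 - ‖p‖ ^ 2) ^ 2 - ε)
          * (1 - 2 * p + ((‖p‖ ^ 2 : ℝ) : ℂ)).re >
      2 * ‖p‖ ^ 2 *
        ‖(ε : ℂ) ^ 2 - (ε : ℂ) * (1 - 2 * p + ((‖p‖ ^ 2 : ℝ) : ℂ)) ^ 2‖ := by
  set w : ℂ := 1 - 2 * p + ((‖p‖ ^ 2 : ℝ) : ℂ) with hwdef
  have hp1 : p ≠ 1 := by
    rintro rfl
    simp at hp
    linarith
  have hwre : w.re = ‖1 - p‖ ^ 2 := by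
    simp [hwdef, Complex.sq_norm, Complex.normSq_apply]
    ring
  have h1p : (1:ℂ) - p ≠ 0 := sub_ne_zero.mpr (Ne.symm hp1)
  have hu : 0 < w.re := by
    rw [hwre]
    have := norm_pos_iff.mpr h1p
    positivity
  clear_value w
  have hkey : ‖(ε : ℂ) ^ 2 - (ε : ℂ) * w ^ 2‖ < ε ^ 2 + ε * ‖w‖ ^ 2 := by
    have h1 : 0 ≤ ε ^ 2 + ε * ‖w‖ ^ 2 := by positivity
    refine lt_of_pow_lt_pow_left₀ 2 h1 ?_
    rw [Complex.sq_norm]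
    have hsq : ‖w‖ ^ 2 = w.re ^ 2 + w.im ^ 2 := by
      rw [Complex.sq_norm, Complex.normSq_apply]; ring
    rw [hsq]
    simp only [Complex.normSq_apply, Complex.sub_re, Complex.sub_im, Complex.mul_re,
      Complex.mul_im, pow_two, Complex.ofReal_re, Complex.ofReal_im]
    ring_nf
    nlinarith [mul_pos (pow_pos hε 3) (mul_pos hu hu)]
  have ha : 0 ≤ ‖p‖ := norm_nonneg p
  have hT : 0 ≤ 2 * ε * ((1 - ‖p‖ ^ 2) ^ 2 - ε) * w.re := by
    have : 0 ≤ (1 - ‖p‖ ^ 2) ^ 2 - ε := by linarith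
    positivity
  rcases eq_or_lt_of_le ha with h0 | h0
  · have hp0 : p = 0 := by
      have := norm_eq_zero.mp h0.symm
      exact this
    subst hp0
    simp only [norm_zero] at *
    have : w.re = 1 := by simp [hwdef]
    rw [this] at *
    simp
    nlinarith
  · have hlt := mul_lt_mul_of_pos_left hkey (by positivity : (0:ℝ) < 2 * ‖p‖ ^ 2)
    nlinarith [hlt, hT]
end

section
/- For every ε ∈ (0,1), the domain D_ε is strongly linearly convex: its defining function r(s,p) = |s - conj(s)p|² + ε - (1-|p|²)² satisfies, at every boundary point (s₀,p₀) and every nonzero complex tangent vector (X₁,X₂), the inequality Σ_{j,k} r_{z_j z̄_k}(s₀,p₀) X_j X̄_k > |Σ_{j,k} r_{z_j z_k}(s₀,p₀) X_j X_k|. -/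
/-!
On the boundary the complex tangent line at `(s, p)` is spanned by `N = (r_p, -r_s)`, and the
Levi form `L` and the complex Hessian `H` are homogeneous, so it suffices to compare them at `N`. Put `u = s - s̄p`, `v = u - ūp`,
`ρ = |p|²`, `q = 1 - ρ`; the boundary equation reads `|u|² + ε = q²`, and substituting it for `ε`
the Wirtinger calculus gives
  `q² L(N) = 2ε (ρ (2ε(1 + ρ) + |v|²) + |u|² q²)`,  `q² H(N) = -2ε p̄² (4εp̄ - v̄²)`.
As `|p| ≠ 1`, `4ε|p| < 2ε(1 + ρ)`, so `|4εp̄ - v̄²| < 2ε(1 + ρ) + |v|²` by the triangle inequality,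
whence `|H(N)| < L(N)` as soon as `ρ > 0` or `u ≠ 0`; both vanish only at `(0, 0)`, which lies on
the boundary only when `ε = 1`.
-/

open Complex

/-- Wirtinger derivative `∂f/∂λ` for `f : ℂ → ℂ`. -/
noncomputable def wd (f : ℂ → ℂ) (z : ℂ) : ℂ :=
  (fderiv ℝ f z 1 - Complex.I * fderiv ℝ f z Complex.I) / 2

/-- Conjugate Wirtinger derivative `∂f/∂λ̄`. -/
noncomputable def wdBar (f : ℂ → ℂ) (z : ℂ) : ℂ :=
  (fderiv ℝ f z 1 + Complex.I * fderiv ℝ f z Complex.I) / 2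

/-- Wirtinger derivative in the `j`-th variable of `f : ℂ × ℂ → ℂ` (`j = 1, 2`). -/
noncomputable def wd1 (f : ℂ × ℂ → ℂ) (z : ℂ × ℂ) : ℂ := wd (fun w => f (w, z.2)) z.1
noncomputable def wd2 (f : ℂ × ℂ → ℂ) (z : ℂ × ℂ) : ℂ := wd (fun w => f (z.1, w)) z.2
noncomputable def wdBar1 (f : ℂ × ℂ → ℂ) (z : ℂ × ℂ) : ℂ := wdBar (fun w => f (w, z.2)) z.1
noncomputable def wdBar2 (f : ℂ × ℂ → ℂ) (z : ℂ × ℂ) : ℂ := wdBar (fun w => f (z.1, w)) z.2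

/-- The complexified defining function. -/
noncomputable def rC (ε : ℝ) (sp : ℂ × ℂ) : ℂ := (rdef ε sp : ℂ)

open ComplexConjugate

def HasWirtingerDerivAt (f : ℂ → ℂ) (a b z : ℂ) : Prop :=
  HasFDerivAt f (a • ContinuousLinearMap.id ℝ ℂ + b • (conjCLE : ℂ →L[ℝ] ℂ)) z

namespace HasWirtingerDerivAt

variable {f g : ℂ → ℂ} {a b a' b' z : ℂ}

theorem wd_eq (h : HasWirtingerDerivAt f a b z) : wd f z = a := by
  rw [wd, h.fderiv]
  simp only [add_apply, smul_apply, ContinuousLinearMap.id_apply, ContinuousLinearEquiv.coe_coe,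
    conjCLE_apply, map_one, conj_I, smul_eq_mul]
  linear_combination (b - a) / 2 * I_sq

theorem wdBar_eq (h : HasWirtingerDerivAt f a b z) : wdBar f z = b := by
  rw [wdBar, h.fderiv]
  simp only [add_apply, smul_apply, ContinuousLinearMap.id_apply, ContinuousLinearEquiv.coe_coe,
    conjCLE_apply, map_one, conj_I, smul_eq_mul]
  linear_combination (a - b) / 2 * I_sq

theorem congr_deriv (h : HasWirtingerDerivAt f a b z) (ha : a = a') (hb : b = b') :
    HasWirtingerDerivAt f a' b' z :=
  ha ▸ hb ▸ h

theorem add (hf : HasWirtingerDerivAt f a b z) (hg : HasWirtingerDerivAt g a' b' z) :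
    HasWirtingerDerivAt (fun w => f w + g w) (a + a') (b + b') z := by
  refine (HasFDerivAt.add hf hg).congr_fderiv ?_
  ext1 w
  simp only [add_apply, smul_apply, smul_eq_mul]
  ring

theorem sub (hf : HasWirtingerDerivAt f a b z) (hg : HasWirtingerDerivAt g a' b' z) :
    HasWirtingerDerivAt (fun w => f w - g w) (a - a') (b - b') z := by
  refine (HasFDerivAt.sub hf hg).congr_fderiv ?_
  ext1 w
  simp only [add_apply, sub_apply, smul_apply, smul_eq_mul]
  ring

theorem mul (hf : HasWirtingerDerivAt f a b z) (hg : HasWirtingerDerivAt g a' b' z) :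
    HasWirtingerDerivAt (fun w => f w * g w) (f z * a' + g z * a) (f z * b' + g z * b) z := by
  refine (HasFDerivAt.mul hf hg).congr_fderiv ?_
  ext1 w
  simp only [add_apply, smul_apply, smul_eq_mul]
  ring

theorem star (hf : HasWirtingerDerivAt f a b z) :
    HasWirtingerDerivAt (fun w => conj (f w)) (conj b) (conj a) z := by
  refine ((conjCLE : ℂ →L[ℝ] ℂ).hasFDerivAt.comp z hf).congr_fderiv ?_
  ext1 w
  simp only [ContinuousLinearMap.coe_comp, Function.comp_apply, add_apply, smul_apply,
    ContinuousLinearMap.id_apply, ContinuousLinearEquiv.coe_coe, conjCLE_apply, smul_eq_mul,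
    map_add, map_mul, conj_conj]
  ring

end HasWirtingerDerivAt

theorem hasWirtingerDerivAt_id (z : ℂ) : HasWirtingerDerivAt (fun w => w) 1 0 z :=
  (hasFDerivAt_id z).congr_fderiv (by ext1 w; simp)

theorem hasWirtingerDerivAt_const (c z : ℂ) : HasWirtingerDerivAt (fun _ => c) 0 0 z :=
  (hasFDerivAt_const c z).congr_fderiv (by ext1 w; simp)

noncomputable def leviForm (f : ℂ × ℂ → ℂ) (z X : ℂ × ℂ) : ℂ :=
  wdBar1 (wd1 f) z * X.1 * conj X.1 + wdBar2 (wd1 f) z * X.1 * conj X.2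
    + wdBar1 (wd2 f) z * X.2 * conj X.1 + wdBar2 (wd2 f) z * X.2 * conj X.2

noncomputable def complexHessian (f : ℂ × ℂ → ℂ) (z X : ℂ × ℂ) : ℂ :=
  wd1 (wd1 f) z * X.1 * X.1 + wd2 (wd1 f) z * X.1 * X.2
    + wd1 (wd2 f) z * X.2 * X.1 + wd2 (wd2 f) z * X.2 * X.2

noncomputable def tangentVector (f : ℂ × ℂ → ℂ) (z : ℂ × ℂ) : ℂ × ℂ := (wd2 f z, -wd1 f z)

theorem leviForm_smul (f : ℂ × ℂ → ℂ) (z X : ℂ × ℂ) (c : ℂ) :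
    leviForm f z (c • X) = normSq c * leviForm f z X := by
  simp only [leviForm, Prod.smul_fst, Prod.smul_snd, smul_eq_mul, map_mul, ← mul_conj]
  ring

theorem complexHessian_smul (f : ℂ × ℂ → ℂ) (z X : ℂ × ℂ) (c : ℂ) :
    complexHessian f z (c • X) = c ^ 2 * complexHessian f z X := by
  simp only [complexHessian, Prod.smul_fst, Prod.smul_snd, smul_eq_mul]
  ring

theorem exists_eq_smul_of_mul_add_mul_eq_zero {K : Type*} [Field K] {a b : K} {x : K × K}
    (hab : (a, b) ≠ 0) (h : a * x.1 + b * x.2 = 0) : ∃ c : K, x = c • (b, -a) := by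
  by_cases ha : a = 0
  · have hb : b ≠ 0 := fun hb => hab (by rw [ha, hb, Prod.mk_zero_zero])
    have hx2 : x.2 = 0 := by simpa [ha, hb] using h
    exact ⟨x.1 / b, Prod.ext (by simp [hb]) (by simp [ha, hx2])⟩
  · refine ⟨-x.2 / a, Prod.ext ?_ (by simp [ha])⟩
    rw [Prod.smul_fst, smul_eq_mul, div_mul_eq_mul_div, eq_div_iff ha]
    linear_combination h

theorem norm_four_mul_conj_sub_conj_sq_lt {ε : ℝ} (hε : 0 < ε) {p w : ℂ} (hp : ‖p‖ ≠ 1) :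
    ‖4 * ε * conj p - conj w ^ 2‖ < 2 * ε * (1 + normSq p) + normSq w :=
  calc ‖4 * ε * conj p - conj w ^ 2‖ ≤ 4 * ε * ‖p‖ + normSq w := by
        refine (norm_sub_le _ _).trans_eq ?_
        rw [norm_mul, norm_mul, norm_pow, norm_conj, norm_conj, norm_ofNat, norm_real,
          Real.norm_of_nonneg hε.le, normSq_eq_norm_sq]
    _ < 2 * ε * (1 + normSq p) + normSq w := by
        rw [normSq_eq_norm_sq p]
        nlinarith [mul_pos hε (sq_pos_of_ne_zero (sub_ne_zero.mpr hp))]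

theorem hasWirtingerDerivAt_self_sub_conj_mul (s p : ℂ) :
    HasWirtingerDerivAt (fun w => w - conj w * p) 1 (-p) s :=
  ((hasWirtingerDerivAt_id s).sub
    ((hasWirtingerDerivAt_id s).star.mul (hasWirtingerDerivAt_const p s))).congr_deriv
    (by simp) (by simp)

theorem hasWirtingerDerivAt_const_sub_const_mul (s p : ℂ) :
    HasWirtingerDerivAt (fun w => s - conj s * w) (-conj s) 0 p :=
  ((hasWirtingerDerivAt_const s p).sub
    ((hasWirtingerDerivAt_const (conj s) p).mul (hasWirtingerDerivAt_id p))).congr_deriv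
    (by simp) (by simp)

theorem rC_eq (ε : ℝ) (s p : ℂ) :
    rC ε (s, p) = (s - conj s * p) * conj (s - conj s * p) + ε - (1 - p * conj p) ^ 2 := by
  simp only [rC, rdef, mul_conj, ← normSq_eq_norm_sq]
  push_cast
  ring

theorem wd1_rC (ε : ℝ) (z : ℂ × ℂ) :
    wd1 (rC ε) z = conj (z.1 - conj z.1 * z.2) - conj z.2 * (z.1 - conj z.1 * z.2) := by
  obtain ⟨s, p⟩ := z
  have hu := hasWirtingerDerivAt_self_sub_conj_mul s p
  have h := ((hu.mul hu.star).add (hasWirtingerDerivAt_const (ε : ℂ) s)).sub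
    (hasWirtingerDerivAt_const ((1 - p * conj p) ^ 2) s)
  simp only [← rC_eq] at h
  rw [wd1, h.wd_eq]
  simp only [map_neg]
  ring

theorem wd2_rC (ε : ℝ) (z : ℂ × ℂ) :
    wd2 (rC ε) z =
      2 * conj z.2 * (1 - z.2 * conj z.2) - conj z.1 * conj (z.1 - conj z.1 * z.2) := by
  obtain ⟨s, p⟩ := z
  have hu := hasWirtingerDerivAt_const_sub_const_mul s p
  have hq := (hasWirtingerDerivAt_const 1 p).sub
    ((hasWirtingerDerivAt_id p).mul (hasWirtingerDerivAt_id p).star)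
  have h := ((hu.mul hu.star).add (hasWirtingerDerivAt_const (ε : ℂ) p)).sub (hq.mul hq)
  show wd (fun w => rC ε (s, w)) p = _
  simp only [rC_eq, sq]
  rw [h.wd_eq]
  simp only [map_zero]
  ring

theorem hasWirtingerDerivAt_wd1_rC_fst (ε : ℝ) (s p : ℂ) :
    HasWirtingerDerivAt (fun w => wd1 (rC ε) (w, p)) (-2 * conj p) (1 + p * conj p) s := by
  have hu := hasWirtingerDerivAt_self_sub_conj_mul s p
  simp only [wd1_rC]
  exact (hu.star.sub ((hasWirtingerDerivAt_const (conj p) s).mul hu)).congr_deriv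
    (by simp only [map_neg]; ring) (by simp only [map_one]; ring)

theorem hasWirtingerDerivAt_wd1_rC_snd (ε : ℝ) (s p : ℂ) :
    HasWirtingerDerivAt (fun w => wd1 (rC ε) (s, w)) (conj s * conj p) (-2 * s + conj s * p) p := by
  have hu := hasWirtingerDerivAt_const_sub_const_mul s p
  simp only [wd1_rC]
  exact (hu.star.sub ((hasWirtingerDerivAt_id p).star.mul hu)).congr_deriv
    (by simp only [map_zero]; ring) (by simp only [map_neg, map_one, conj_conj]; ring)

theorem hasWirtingerDerivAt_wd2_rC_fst (ε : ℝ) (s p : ℂ) :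
    HasWirtingerDerivAt (fun w => wd2 (rC ε) (w, p)) (conj s * conj p)
      (-2 * conj s + s * conj p) s := by
  have hu := hasWirtingerDerivAt_self_sub_conj_mul s p
  simp only [wd2_rC]
  exact ((hasWirtingerDerivAt_const _ s).sub
    ((hasWirtingerDerivAt_id s).star.mul hu.star)).congr_deriv
    (by simp only [map_zero, map_neg]; ring)
    (by simp only [map_one, map_sub, map_mul, conj_conj]; ring)

theorem hasWirtingerDerivAt_wd2_rC_snd (ε : ℝ) (s p : ℂ) :
    HasWirtingerDerivAt (fun w => wd2 (rC ε) (s, w)) (-2 * conj p ^ 2)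
      (s * conj s + 2 - 4 * p * conj p) p := by
  have hu := hasWirtingerDerivAt_const_sub_const_mul s p
  have hp := hasWirtingerDerivAt_id p
  simp only [wd2_rC]
  exact ((((hasWirtingerDerivAt_const 2 p).mul hp.star).mul
      ((hasWirtingerDerivAt_const 1 p).sub (hp.mul hp.star))).sub
    ((hasWirtingerDerivAt_const (conj s) p).mul hu.star)).congr_deriv
    (by simp only [map_zero]; ring) (by simp only [map_one, map_neg, conj_conj]; ring)

theorem leviForm_rC (ε : ℝ) (s p : ℂ) (X : ℂ × ℂ) :
    leviForm (rC ε) (s, p) X =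
      (1 + p * conj p) * X.1 * conj X.1 + (-2 * s + conj s * p) * X.1 * conj X.2
        + (-2 * conj s + s * conj p) * X.2 * conj X.1
        + (s * conj s + 2 - 4 * p * conj p) * X.2 * conj X.2 := by
  rw [leviForm,
    show wdBar1 (wd1 (rC ε)) (s, p) = _ from (hasWirtingerDerivAt_wd1_rC_fst ε s p).wdBar_eq,
    show wdBar2 (wd1 (rC ε)) (s, p) = _ from (hasWirtingerDerivAt_wd1_rC_snd ε s p).wdBar_eq,
    show wdBar1 (wd2 (rC ε)) (s, p) = _ from (hasWirtingerDerivAt_wd2_rC_fst ε s p).wdBar_eq,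
    show wdBar2 (wd2 (rC ε)) (s, p) = _ from (hasWirtingerDerivAt_wd2_rC_snd ε s p).wdBar_eq]

theorem complexHessian_rC (ε : ℝ) (s p : ℂ) (X : ℂ × ℂ) :
    complexHessian (rC ε) (s, p) X =
      -2 * conj p * X.1 * X.1 + conj s * conj p * X.1 * X.2
        + conj s * conj p * X.2 * X.1 - 2 * conj p ^ 2 * X.2 * X.2 := by
  rw [complexHessian,
    show wd1 (wd1 (rC ε)) (s, p) = _ from (hasWirtingerDerivAt_wd1_rC_fst ε s p).wd_eq,
    show wd2 (wd1 (rC ε)) (s, p) = _ from (hasWirtingerDerivAt_wd1_rC_snd ε s p).wd_eq,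
    show wd1 (wd2 (rC ε)) (s, p) = _ from (hasWirtingerDerivAt_wd2_rC_fst ε s p).wd_eq,
    show wd2 (wd2 (rC ε)) (s, p) = _ from (hasWirtingerDerivAt_wd2_rC_snd ε s p).wd_eq]
  ring

theorem normSq_add_eq_of_mem_frontier_Dset {ε : ℝ} (hε : 0 ≤ ε) {z : ℂ × ℂ}
    (hz : z ∈ frontier (Dset ε)) :
    normSq (z.1 - conj z.1 * z.2) + ε = (1 - normSq z.2) ^ 2 := by
  have h : Real.sqrt (‖z.1 - conj z.1 * z.2‖ ^ 2 + ε) + ‖z.2‖ ^ 2 = 1 :=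
    frontier_lt_subset_eq (β := ℂ × ℂ) (by fun_prop) continuous_const hz
  rw [Complex.sq_norm, Complex.sq_norm] at h
  rw [← h, add_sub_cancel_right, Real.sq_sqrt (add_nonneg (normSq_nonneg _) hε)]

theorem wd_rC_ne_zero {ε : ℝ} (hε : 0 < ε) (hε1 : ε < 1) {s p : ℂ}
    (hbd : normSq (s - conj s * p) + ε = (1 - normSq p) ^ 2) :
    (wd1 (rC ε) (s, p), wd2 (rC ε) (s, p)) ≠ 0 := by
  have hq : 1 - normSq p ≠ 0 := by
    intro h
    rw [h] at hbd
    linarith [normSq_nonneg (s - conj s * p)]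
  rw [wd1_rC, wd2_rC, Ne, Prod.mk_eq_zero]
  rintro ⟨hA, hB⟩
  dsimp only at hA hB
  have hu : s - conj s * p = 0 := by
    have h := congrArg normSq (sub_eq_zero.mp hA)
    rw [normSq_conj, normSq_mul, normSq_conj] at h
    exact normSq_eq_zero.mp <| (mul_eq_zero.mp
      (by linear_combination h : normSq (s - conj s * p) * (1 - normSq p) = 0)).resolve_right hq
  have hp : p = 0 := by
    rw [hu, map_zero, mul_zero, sub_zero, mul_conj] at hB
    have hq' : (1 : ℂ) - normSq p ≠ 0 := by exact_mod_cast hq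
    simpa [hq'] using hB
  rw [hu, hp, map_zero] at hbd
  norm_num at hbd
  linarith

theorem leviForm_rC_tangentVector {ε : ℝ} {s p u v : ℂ} (hu : u = s - conj s * p)
    (hv : v = u - conj u * p) (hε : ε = (1 - normSq p) ^ 2 - normSq u) :
    ((1 - normSq p) ^ 2 : ℝ) * leviForm (rC ε) (s, p) (tangentVector (rC ε) (s, p)) =
      (2 * ε * (normSq p * (2 * ε * (1 + normSq p) + normSq v) + normSq u * (1 - normSq p) ^ 2)
        : ℝ) := by
  rw [leviForm_rC, tangentVector, wd1_rC, wd2_rC]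
  subst hv hu hε
  push_cast
  simp only [← mul_conj, map_sub, map_mul, map_neg, map_one, map_ofNat, conj_conj]
  ring

theorem complexHessian_rC_tangentVector {ε : ℝ} {s p u v : ℂ} (hu : u = s - conj s * p)
    (hv : v = u - conj u * p) (hε : ε = (1 - normSq p) ^ 2 - normSq u) :
    ((1 - normSq p) ^ 2 : ℝ) * complexHessian (rC ε) (s, p) (tangentVector (rC ε) (s, p)) =
      -2 * ε * conj p ^ 2 * (4 * ε * conj p - conj v ^ 2) := by
  rw [complexHessian_rC, tangentVector, wd1_rC, wd2_rC]
  subst hv hu hε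
  push_cast
  simp only [← mul_conj, map_sub, map_mul, conj_conj]
  ring

theorem norm_complexHessian_rC_lt_re_leviForm {ε : ℝ} (hε : 0 < ε) (hε1 : ε < 1) {s p : ℂ}
    (hbd : normSq (s - conj s * p) + ε = (1 - normSq p) ^ 2) :
    ‖complexHessian (rC ε) (s, p) (tangentVector (rC ε) (s, p))‖ <
      (leviForm (rC ε) (s, p) (tangentVector (rC ε) (s, p))).re := by
  have hε' : ε = (1 - normSq p) ^ 2 - normSq (s - conj s * p) := by linarith
  have hL := congrArg re (leviForm_rC_tangentVector rfl rfl hε')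
  have hH := congrArg norm (complexHessian_rC_tangentVector rfl rfl hε')
  rw [re_ofReal_mul, ofReal_re] at hL
  rw [norm_mul, norm_real, Real.norm_of_nonneg (sq_nonneg _), norm_mul, norm_mul, norm_mul,
    norm_pow, norm_conj, norm_neg, norm_ofNat, norm_real, Real.norm_of_nonneg hε.le,
    ← normSq_eq_norm_sq] at hH
  set u := s - conj s * p
  set v := u - conj u * p
  set ρ := normSq p
  set m := normSq u
  have hρ0 : 0 ≤ ρ := normSq_nonneg p
  have hm0 : 0 ≤ m := normSq_nonneg u
  have hq : 0 < (1 - ρ) ^ 2 := by linarith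
  have hmρ : 0 < m + ρ := by
    by_contra! h
    nlinarith
  have hW : ‖4 * ε * conj p - conj v ^ 2‖ < 2 * ε * (1 + ρ) + normSq v := by
    refine norm_four_mul_conj_sub_conj_sq_lt hε fun h => hq.ne' ?_
    have hρ1 : ρ = 1 := (normSq_eq_norm_sq p).trans (by rw [h, one_pow])
    rw [hρ1, sub_self, zero_pow two_ne_zero]
  have key : ρ * ‖4 * ε * conj p - conj v ^ 2‖ <
      ρ * (2 * ε * (1 + ρ) + normSq v) + m * (1 - ρ) ^ 2 := by
    rcases hρ0.lt_or_eq with hρ0 | hρ0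
    · nlinarith [mul_lt_mul_of_pos_left hW hρ0]
    · rw [← hρ0] at hmρ ⊢
      nlinarith
  refine lt_of_mul_lt_mul_left ?_ hq.le
  rw [hL, hH, mul_assoc]
  gcongr

theorem stmt16 (ε : ℝ) (hε : 0 < ε) (hε1 : ε < 1) :
    ∀ z₀ ∈ frontier (Dset ε), ∀ X : ℂ × ℂ, X ≠ 0 →
      wd1 (rC ε) z₀ * X.1 + wd2 (rC ε) z₀ * X.2 = 0 →
      (wdBar1 (wd1 (rC ε)) z₀ * X.1 * (starRingEnd ℂ) X.1
        + wdBar2 (wd1 (rC ε)) z₀ * X.1 * (starRingEnd ℂ) X.2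
        + wdBar1 (wd2 (rC ε)) z₀ * X.2 * (starRingEnd ℂ) X.1
        + wdBar2 (wd2 (rC ε)) z₀ * X.2 * (starRingEnd ℂ) X.2).re >
      ‖wd1 (wd1 (rC ε)) z₀ * X.1 * X.1
        + wd2 (wd1 (rC ε)) z₀ * X.1 * X.2
        + wd1 (wd2 (rC ε)) z₀ * X.2 * X.1
        + wd2 (wd2 (rC ε)) z₀ * X.2 * X.2‖ := by
  rintro ⟨s, p⟩ hz X hX htan
  have hbd := normSq_add_eq_of_mem_frontier_Dset hε.le hz
  obtain ⟨c, rfl⟩ := exists_eq_smul_of_mul_add_mul_eq_zero (wd_rC_ne_zero hε hε1 hbd) htan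
  have hc : 0 < normSq c := normSq_pos.mpr (by rintro rfl; exact hX (zero_smul _ _))
  change ‖complexHessian (rC ε) (s, p) (c • _)‖ < (leviForm (rC ε) (s, p) (c • _)).re
  rw [leviForm_smul, complexHessian_smul, re_ofReal_mul, norm_mul, norm_pow, ← normSq_eq_norm_sq]
  exact mul_lt_mul_of_pos_left (norm_complexHessian_rC_lt_re_leviForm hε hε1 hbd) hc
end

section
/- For ε ∈ (0,1) and p ∈ ℂ with 0 < (1-|p|²)² - ε, setting S := (1-|p|²)² - ε > 0, the inequality |1-2p+|p|²|²·2|p|²·ε + 2|p|²ε² + 2εS·|1-p|² > 2|p|²ε·|ε - (1-2p+|p|²)²| holds; equivalently, dividing by 2ε: |p|²|1-2p+|p|²|² + |p|²ε + S|1-p|² > |p|²·|ε - (1-2p+|p|²)²|. -/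
/-!
By the triangle inequality `‖ε - b²‖ ≤ ε + ‖b‖²`, so `‖p‖²‖ε - b²‖` is bounded by the first two
terms on the left of the second inequality; the remaining term `S‖1 - p‖²` is strictly positive,
because `S > 0` rules out `p = 1`. The first inequality is `2ε` times the second.
-/

open Complex

lemma norm_ofReal_sub_le_add_norm {r : ℝ} (hr : 0 ≤ r) (z : ℂ) : ‖(r : ℂ) - z‖ ≤ r + ‖z‖ := by
  simpa [abs_of_nonneg hr] using norm_sub_le (r : ℂ) z

lemma ne_one_of_lt_sq_one_sub_norm_sq {ε : ℝ} (hε : 0 < ε) {p : ℂ}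
    (hp : ε < (1 - ‖p‖ ^ 2) ^ 2) : p ≠ 1 := by
  rintro rfl
  norm_num at hp
  linarith

theorem stmt18_general (ε : ℝ) (hε : 0 < ε) (p : ℂ)
    (hp : ε < (1 - ‖p‖ ^ 2) ^ 2) :
    let S : ℝ := (1 - ‖p‖ ^ 2) ^ 2 - ε
    let b : ℂ := 1 - 2 * p + ((‖p‖ ^ 2 : ℝ) : ℂ)
    (‖b‖ ^ 2 * (2 * ‖p‖ ^ 2 * ε) + 2 * ‖p‖ ^ 2 * ε ^ 2
        + 2 * ε * S * ‖1 - p‖ ^ 2 >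
      2 * ‖p‖ ^ 2 * ε * ‖(ε : ℂ) - b ^ 2‖) ∧
    (‖p‖ ^ 2 * ‖b‖ ^ 2 + ‖p‖ ^ 2 * ε
        + S * ‖1 - p‖ ^ 2 >
      ‖p‖ ^ 2 * ‖(ε : ℂ) - b ^ 2‖) := by
  intro S b
  have hS : 0 < S := sub_pos.mpr hp
  have h1p : 0 < ‖1 - p‖ ^ 2 :=
    pow_pos (norm_pos_iff.mpr (sub_ne_zero.mpr (ne_one_of_lt_sq_one_sub_norm_sq hε hp).symm)) 2
  have hN : ‖(ε : ℂ) - b ^ 2‖ ≤ ε + ‖b‖ ^ 2 := by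
    rw [← norm_pow]
    exact norm_ofReal_sub_le_add_norm hε.le (b ^ 2)
  have hred : ‖p‖ ^ 2 * ‖b‖ ^ 2 + ‖p‖ ^ 2 * ε + S * ‖1 - p‖ ^ 2 >
      ‖p‖ ^ 2 * ‖(ε : ℂ) - b ^ 2‖ := by
    nlinarith [mul_le_mul_of_nonneg_left hN (sq_nonneg ‖p‖), mul_pos hS h1p]
  refine ⟨?_, hred⟩
  nlinarith [mul_lt_mul_of_pos_left hred (by positivity : (0 : ℝ) < 2 * ε)]

theorem stmt18 (ε : ℝ) (hε : 0 < ε) (hε1 : ε < 1) (p : ℂ)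
    (hp : ε < (1 - ‖p‖ ^ 2) ^ 2) :
    let S : ℝ := (1 - ‖p‖ ^ 2) ^ 2 - ε
    let b : ℂ := 1 - 2 * p + ((‖p‖ ^ 2 : ℝ) : ℂ)
    (‖b‖ ^ 2 * (2 * ‖p‖ ^ 2 * ε) + 2 * ‖p‖ ^ 2 * ε ^ 2
        + 2 * ε * S * ‖1 - p‖ ^ 2 >
      2 * ‖p‖ ^ 2 * ε * ‖(ε : ℂ) - b ^ 2‖) ∧
    (‖p‖ ^ 2 * ‖b‖ ^ 2 + ‖p‖ ^ 2 * ε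
        + S * ‖1 - p‖ ^ 2 >
      ‖p‖ ^ 2 * ‖(ε : ℂ) - b ^ 2‖) :=
  stmt18_general ε hε p hp
end
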